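/- Let J = ∫₀³ (2−x) · ∏_{γ∈Φ⁺} ( ⟨xω₂+(6−2x)(ω₀+ω₁), γ⟩ / ⟨ρ, γ⟩ ) dx (an integral of a rational function of x over [0,3], the denominator being a nonzero constant). Then 8 · 7! · J = 2⁴·3⁹·5·11; in particular 8 · 7! · J > 0. (This quantity is the invariant ξ(Z) = β(E) for the Pasquier two-orbits variety Pas_{A₁×G₂}, whose positivity proves that Pas_{A₁×G₂} is K-polystable and hence admits a Kähler–Einstein metric.) -/

import Mathlib

open scoped InnerProductSpace

noncomputable section

/-!
Pairing with the simple roots (α₀, α₁, α₂), the weight s ω₂ + t (ω₀ + ω₁) has coordinates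
(t, t, 3s) and ρ has (1, 1, 3); the seven positive roots then turn the product into
t² s (t + s)(t + 2s)(t + 3s)(2t + 3s) / 120. At s = x, t = 6 − 2x the integrand is the degree-7
polynomial (2 − x)(6 − 2x)² x (6 − x)(6 + x)(12 − x) / 20, whose integral over [0, 3],
computed monomial by monomial, is J = 24057/56, and 8 · 7! · 24057/56 = 2⁴·3⁹·5·11.
-/

namespace PasquierA1G2

/-- ℝ⁵ with its standard Euclidean inner product. -/
abbrev W : Type := EuclideanSpace ℝ (Fin 5)

/-- The simple roots of A₁ × G₂, realized in ℝ⁵. -/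
def α₀ : W := (WithLp.equiv 2 (Fin 5 → ℝ)).symm ![1, -1, 0, 0, 0]
def α₁ : W := (WithLp.equiv 2 (Fin 5 → ℝ)).symm ![0, 0, 1, -1, 0]
def α₂ : W := (WithLp.equiv 2 (Fin 5 → ℝ)).symm ![0, 0, -2, 1, 1]

/-- The fundamental weights of A₁ × G₂. -/
def ω₀ : W := (1 / 2 : ℝ) • α₀
def ω₁ : W := (2 : ℝ) • α₁ + α₂
def ω₂ : W := (3 : ℝ) • α₁ + (2 : ℝ) • α₂

/-- The 7 positive roots of A₁ × G₂. -/
def PhiPlus : List W :=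
  [α₀, α₁, α₂, α₁ + α₂, (2 : ℝ) • α₁ + α₂, (3 : ℝ) • α₁ + α₂,
   (3 : ℝ) • α₁ + (2 : ℝ) • α₂]

/-- The half-sum of positive roots ρ = α₀/2 + 5α₁ + 3α₂. -/
def ρ : W := (1 / 2 : ℝ) • α₀ + (5 : ℝ) • α₁ + (3 : ℝ) • α₂

theorem integral_sum_mul_pow {n : ℕ} (c : Fin n → ℝ) (a b : ℝ) :
    ∫ x in a..b, ∑ k, c k * x ^ (k : ℕ) =
      ∑ k, c k * (b ^ ((k : ℕ) + 1) - a ^ ((k : ℕ) + 1)) / ((k : ℕ) + 1) := by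
  rw [intervalIntegral.integral_finsetSum fun k _ => by
    exact (continuous_const.mul (continuous_pow _)).intervalIntegrable a b]
  refine Finset.sum_congr rfl fun k _ => ?_
  rw [intervalIntegral.integral_const_mul, integral_pow, mul_div_assoc]

theorem inner_equiv_symm_fin_five (a₀ a₁ a₂ a₃ a₄ b₀ b₁ b₂ b₃ b₄ : ℝ) :
    ⟪(WithLp.equiv 2 (Fin 5 → ℝ)).symm ![a₀, a₁, a₂, a₃, a₄],
        (WithLp.equiv 2 (Fin 5 → ℝ)).symm ![b₀, b₁, b₂, b₃, b₄]⟫_ℝ =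
      a₀ * b₀ + a₁ * b₁ + a₂ * b₂ + a₃ * b₃ + a₄ * b₄ := by
  simp [EuclideanSpace.inner_toLp_toLp, dotProduct, Fin.sum_univ_five, mul_comm]

theorem norm_α₀_sq : ‖α₀‖ ^ 2 = 2 := by
  rw [← real_inner_self_eq_norm_sq, α₀, inner_equiv_symm_fin_five]; norm_num

theorem norm_α₁_sq : ‖α₁‖ ^ 2 = 2 := by
  rw [← real_inner_self_eq_norm_sq, α₁, inner_equiv_symm_fin_five]; norm_num

theorem norm_α₂_sq : ‖α₂‖ ^ 2 = 6 := by
  rw [← real_inner_self_eq_norm_sq, α₂, inner_equiv_symm_fin_five]; norm_num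

theorem inner_α₀_α₁ : ⟪α₀, α₁⟫_ℝ = 0 := by
  rw [α₀, α₁, inner_equiv_symm_fin_five]; norm_num

theorem inner_α₀_α₂ : ⟪α₀, α₂⟫_ℝ = 0 := by
  rw [α₀, α₂, inner_equiv_symm_fin_five]; norm_num

theorem inner_α₁_α₂ : ⟪α₁, α₂⟫_ℝ = -3 := by
  rw [α₁, α₂, inner_equiv_symm_fin_five]; norm_num

theorem inner_α₁_α₀ : ⟪α₁, α₀⟫_ℝ = 0 := by
  rw [real_inner_comm, inner_α₀_α₁]

theorem inner_α₂_α₀ : ⟪α₂, α₀⟫_ℝ = 0 := by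
  rw [real_inner_comm, inner_α₀_α₂]

theorem inner_α₂_α₁ : ⟪α₂, α₁⟫_ℝ = -3 := by
  rw [real_inner_comm, inner_α₁_α₂]

theorem inner_ρ_α₀ : ⟪ρ, α₀⟫_ℝ = 1 := by
  simp only [ρ, inner_add_left, real_inner_smul_left, real_inner_self_eq_norm_sq,
    norm_α₀_sq, inner_α₁_α₀, inner_α₂_α₀]
  norm_num

theorem inner_ρ_α₁ : ⟪ρ, α₁⟫_ℝ = 1 := by
  simp only [ρ, inner_add_left, real_inner_smul_left, real_inner_self_eq_norm_sq,
    norm_α₁_sq, inner_α₀_α₁, inner_α₂_α₁]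
  norm_num

theorem inner_ρ_α₂ : ⟪ρ, α₂⟫_ℝ = 3 := by
  simp only [ρ, inner_add_left, real_inner_smul_left, real_inner_self_eq_norm_sq,
    norm_α₂_sq, inner_α₀_α₂, inner_α₁_α₂]
  norm_num

section Pairings

variable (s t : ℝ)

theorem inner_weight_α₀ : ⟪s • ω₂ + t • (ω₀ + ω₁), α₀⟫_ℝ = t := by
  simp only [ω₀, ω₁, ω₂, inner_add_left, real_inner_smul_left, real_inner_self_eq_norm_sq,
    norm_α₀_sq, inner_α₁_α₀, inner_α₂_α₀]
  ring

theorem inner_weight_α₁ : ⟪s • ω₂ + t • (ω₀ + ω₁), α₁⟫_ℝ = t := by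
  simp only [ω₀, ω₁, ω₂, inner_add_left, real_inner_smul_left, real_inner_self_eq_norm_sq,
    norm_α₁_sq, inner_α₀_α₁, inner_α₂_α₁]
  ring

theorem inner_weight_α₂ : ⟪s • ω₂ + t • (ω₀ + ω₁), α₂⟫_ℝ = 3 * s := by
  simp only [ω₀, ω₁, ω₂, inner_add_left, real_inner_smul_left, real_inner_self_eq_norm_sq,
    norm_α₂_sq, inner_α₀_α₂, inner_α₁_α₂]
  ring

theorem prod_map_inner_div_inner_ρ :
    (PhiPlus.map fun γ => ⟪s • ω₂ + t • (ω₀ + ω₁), γ⟫_ℝ / ⟪ρ, γ⟫_ℝ).prod =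
      t ^ 2 * s * (t + s) * (t + 2 * s) * (t + 3 * s) * (2 * t + 3 * s) / 120 := by
  simp only [PhiPlus, List.map_cons, List.map_nil, List.prod_cons, List.prod_nil,
    inner_add_right, real_inner_smul_right, inner_weight_α₀, inner_weight_α₁, inner_weight_α₂,
    inner_ρ_α₀, inner_ρ_α₁, inner_ρ_α₂]
  ring

end Pairings

theorem integrand_eq_sum_mul_pow (x : ℝ) :
    (2 - x) * (PhiPlus.map fun γ => ⟪x • ω₂ + (6 - 2 * x) • (ω₀ + ω₁), γ⟫_ℝ / ⟪ρ, γ⟫_ℝ).prod =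
      ∑ k : Fin 8, ![0, 7776 / 5, -1944, 3996 / 5, -90, -81 / 5, 4, -1 / 5] k * x ^ (k : ℕ) := by
  rw [prod_map_inner_div_inner_ρ, Fin.sum_univ_eight]
  simp only [Matrix.cons_val, Fin.isValue, Fin.coe_ofNat_eq_mod, Nat.reduceMod]
  ring

/-- ξ(Z) = 8 · 7! · J for Pas_{A₁×G₂} equals 2⁴·3⁹·5·11 > 0, where
J = ∫₀³ (2−x) ∏_{γ∈Φ⁺} (⟨xω₂+(6−2x)(ω₀+ω₁), γ⟩ / ⟨ρ, γ⟩) dx. -/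
theorem xi_A1G2_positive :
    (8 : ℝ) * (Nat.factorial 7 : ℝ) *
        (∫ x in (0 : ℝ)..3, (2 - x) *
          (PhiPlus.map fun γ =>
            ⟪x • ω₂ + (6 - 2 * x) • (ω₀ + ω₁), γ⟫_ℝ / ⟪ρ, γ⟫_ℝ).prod)
      = 2 ^ 4 * 3 ^ 9 * 5 * 11 ∧
    0 < (8 : ℝ) * (Nat.factorial 7 : ℝ) *
        (∫ x in (0 : ℝ)..3, (2 - x) *
          (PhiPlus.map fun γ =>
            ⟪x • ω₂ + (6 - 2 * x) • (ω₀ + ω₁), γ⟫_ℝ / ⟪ρ, γ⟫_ℝ).prod) := by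
  have hJ : (∫ x in (0 : ℝ)..3, (2 - x) *
      (PhiPlus.map fun γ => ⟪x • ω₂ + (6 - 2 * x) • (ω₀ + ω₁), γ⟫_ℝ / ⟪ρ, γ⟫_ℝ).prod) =
        24057 / 56 := by
    simp_rw [integrand_eq_sum_mul_pow, integral_sum_mul_pow]
    rw [Fin.sum_univ_eight]
    simp only [Matrix.cons_val, Fin.isValue, Fin.coe_ofNat_eq_mod, Nat.reduceMod]
    norm_num
  rw [hJ]
  norm_num [Nat.factorial]

end PasquierA1G2
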